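/- arXiv:1207.4250 — 2 statements merged into one kernel-verified Lean document; each statement's English description precedes it below -/
import Mathlib

section
/- Let J be a constant antisymmetric m×m matrix, H : ℝ^m → ℝ smooth, and let a_{ij}, b_j (1 ≤ i,j ≤ s) be Runge–Kutta coefficients satisfying the symplecticity condition b_i b_j − b_j a_{ji} − b_i a_{ij} = 0 for all i, j. Suppose Z_i, F_i ∈ ℝ^m satisfy J Z_i = J z₀ + Δt Σ_j a_{ij} J F_j, J z₁ = J z₀ + Δt Σ_j b_j J F_j, and J F_j = ∇H(Z_j). If corresponding linearized quantities dZ_i, dF_i, dz₀, dz₁ satisfy J dZ_i = J dz₀ + Δt Σ_j a_{ij} J dF_j, J dz₁ = J dz₀ + Δt Σ_j b_j J dF_j, and J dF_j = Hess H(Z_j) dZ_j, then dz₁ᵀ J dz₁' = dz₀ᵀ J dz₀' for any two such linearized solutions (dz₀, dZ_i, dF_i, dz₁) and (dz₀', dZ_i', dF_i', dz₁'). -/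
open Matrix

/-- The Euclidean gradient of `f : ℝ^m → ℝ` at `x`, as a vector. -/
noncomputable def grad {m : ℕ} (f : (Fin m → ℝ) → ℝ) (x : Fin m → ℝ) : Fin m → ℝ :=
  fun i => fderiv ℝ f x (Pi.single i 1)

/-- The Hessian matrix of `f : ℝ^m → ℝ` at `x`. -/
noncomputable def hess {m : ℕ} (f : (Fin m → ℝ) → ℝ) (x : Fin m → ℝ) :
    Matrix (Fin m) (Fin m) ℝ :=
  Matrix.of fun i j => fderiv ℝ (fun w => fderiv ℝ f w (Pi.single j 1)) x (Pi.single i 1)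

/-- Any symplectic Runge–Kutta method applied to `J ż = ∇H(z)` preserves the
pre-symplectic pairing `dzᵀ J dz'` of linearized (variational) solutions, for an
arbitrary constant antisymmetric matrix `J`. -/
theorem stmt2 {m s : ℕ} (J : Matrix (Fin m) (Fin m) ℝ) (hJ : Jᵀ = -J)
    (H : (Fin m → ℝ) → ℝ) (hH : ContDiff ℝ (⊤ : ℕ∞) H)
    (a : Fin s → Fin s → ℝ) (b : Fin s → ℝ)
    (hsymp : ∀ i j, b i * b j - b j * a j i - b i * a i j = 0)
    (Δt : ℝ) (z₀ z₁ : Fin m → ℝ) (Z F : Fin s → Fin m → ℝ)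
    (hZ : ∀ i, J.mulVec (Z i) = J.mulVec z₀ + Δt • ∑ j, a i j • J.mulVec (F j))
    (hz₁ : J.mulVec z₁ = J.mulVec z₀ + Δt • ∑ j, b j • J.mulVec (F j))
    (hF : ∀ j, J.mulVec (F j) = grad H (Z j))
    (dz₀ dz₁ : Fin m → ℝ) (dZ dF : Fin s → Fin m → ℝ)
    (hdZ : ∀ i, J.mulVec (dZ i) = J.mulVec dz₀ + Δt • ∑ j, a i j • J.mulVec (dF j))
    (hdz₁ : J.mulVec dz₁ = J.mulVec dz₀ + Δt • ∑ j, b j • J.mulVec (dF j))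
    (hdF : ∀ j, J.mulVec (dF j) = (hess H (Z j)).mulVec (dZ j))
    (dz₀' dz₁' : Fin m → ℝ) (dZ' dF' : Fin s → Fin m → ℝ)
    (hdZ' : ∀ i, J.mulVec (dZ' i) = J.mulVec dz₀' + Δt • ∑ j, a i j • J.mulVec (dF' j))
    (hdz₁' : J.mulVec dz₁' = J.mulVec dz₀' + Δt • ∑ j, b j • J.mulVec (dF' j))
    (hdF' : ∀ j, J.mulVec (dF' j) = (hess H (Z j)).mulVec (dZ' j)) :
    dz₁ ⬝ᵥ J.mulVec dz₁' = dz₀ ⬝ᵥ J.mulVec dz₀' := by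
  classical
  set ω : (Fin m → ℝ) → (Fin m → ℝ) → ℝ := fun u v => u ⬝ᵥ J.mulVec v with hωdef
  have skew : ∀ u v, ω u v = -ω v u := by
    intro u v
    show u ⬝ᵥ J.mulVec v = -(v ⬝ᵥ J.mulVec u)
    rw [dotProduct_mulVec, ← mulVec_transpose, hJ, neg_mulVec, neg_dotProduct, dotProduct_comm]
  have dps : ∀ (u : Fin m → ℝ) (w : Fin s → Fin m → ℝ),
      u ⬝ᵥ ∑ j, w j = ∑ j, u ⬝ᵥ w j := by
    intro u w
    simp only [dotProduct, Finset.sum_apply, Finset.mul_sum]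
    exact Finset.sum_comm
  have lin : ∀ (x y : Fin m → ℝ) (c : Fin s → ℝ) (G : Fin s → Fin m → ℝ),
      J.mulVec x = J.mulVec y + Δt • ∑ j, c j • J.mulVec (G j) →
      ∀ u, ω u x = ω u y + Δt * ∑ j, c j * ω u (G j) := by
    intro x y c G h u
    show u ⬝ᵥ J.mulVec x = u ⬝ᵥ J.mulVec y + Δt * ∑ j, c j * (u ⬝ᵥ J.mulVec (G j))
    simp only [h, dotProduct_add, dotProduct_smul, dps, smul_eq_mul]
  have lin' : ∀ (x y : Fin m → ℝ) (c : Fin s → ℝ) (G : Fin s → Fin m → ℝ),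
      J.mulVec x = J.mulVec y + Δt • ∑ j, c j • J.mulVec (G j) →
      ∀ u, ω x u = ω y u + Δt * ∑ j, c j * ω (G j) u := by
    intro x y c G h u
    have h1 := lin x y c G h u
    rw [skew x u, h1, skew y u]
    have hGs : ∑ j, c j * ω u (G j) = ∑ j, -(c j * ω (G j) u) :=
      Finset.sum_congr rfl fun j _ => by rw [skew u (G j)]; ring
    rw [hGs, Finset.sum_neg_distrib]; ring
  -- symmetric Hessian
  have hd : Differentiable ℝ H := hH.differentiable (by simp)
  have hd2 : Differentiable ℝ (fderiv ℝ H) := (hH.fderiv_right (m := 1) (WithTop.coe_le_coe.mpr le_top)).differentiable one_ne_zero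
  have hsymA : ∀ x : Fin m → ℝ, (hess H x)ᵀ = hess H x := by
    intro x
    ext i j
    simp only [transpose_apply, hess, Matrix.of_apply]
    rw [fderiv_clm_apply (hd2 x) (differentiableAt_const _),
        fderiv_clm_apply (hd2 x) (differentiableAt_const _)]
    simp only [fderiv_fun_const, Pi.zero_apply, ContinuousLinearMap.comp_zero, zero_add]
    exact second_derivative_symmetric (fun y => (hd y).hasFDerivAt) ((hd2 x).hasFDerivAt) _ _
  have symmA : ∀ (A : Matrix (Fin m) (Fin m) ℝ), Aᵀ = A →
      ∀ u v : Fin m → ℝ, u ⬝ᵥ A.mulVec v = v ⬝ᵥ A.mulVec u := by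
    intro A hA u v
    rw [dotProduct_mulVec, ← mulVec_transpose, hA, dotProduct_comm]
  have hkey : ∀ j, ω (dZ j) (dF' j) + ω (dF j) (dZ' j) = 0 := by
    intro j
    rw [skew (dF j) (dZ' j)]
    show dZ j ⬝ᵥ J.mulVec (dF' j) + -(dZ' j ⬝ᵥ J.mulVec (dF j)) = 0
    rw [hdF' j, hdF j, symmA _ (hsymA (Z j)) (dZ' j) (dZ j)]
    ring
  set c : Fin s → Fin s → ℝ := fun i j => ω (dF i) (dF' j) with hcdef
  have E1 : ω dz₁ dz₁' = ω dz₁ dz₀' + Δt * ∑ j, b j * ω dz₁ (dF' j) := lin _ _ _ _ hdz₁' dz₁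
  have E2 : ω dz₁ dz₀' = ω dz₀ dz₀' + Δt * ∑ i, b i * ω (dF i) dz₀' := lin' _ _ _ _ hdz₁ dz₀'
  have E3 : ∀ j, ω dz₁ (dF' j) = ω dz₀ (dF' j) + Δt * ∑ i, b i * c i j :=
    fun j => lin' _ _ _ _ hdz₁ (dF' j)
  have E4 : ∀ i, ω (dF i) dz₀' = ω (dF i) (dZ' i) - Δt * ∑ k, a i k * c i k := by
    intro i
    have h1 := lin _ _ _ _ (hdZ' i) (dF i)
    linarith
  have E5 : ∀ j, ω dz₀ (dF' j) = ω (dZ j) (dF' j) - Δt * ∑ k, a j k * c k j := by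
    intro j
    have h1 := lin' _ _ _ _ (hdZ j) (dF' j)
    linarith
  show ω dz₁ dz₁' = ω dz₀ dz₀'
  have hmain : ∑ j, (b j * ω (dF j) dz₀' + b j * ω dz₁ (dF' j)) = 0 := by
    have hterm : ∀ j, b j * ω (dF j) dz₀' + b j * ω dz₁ (dF' j)
        = Δt * (b j * (∑ i, b i * c i j) - b j * (∑ k, a j k * c j k)
            - b j * (∑ k, a j k * c k j)) := by
      intro j
      rw [E4 j, E3 j, E5 j]
      linear_combination b j * hkey j
    rw [Finset.sum_congr rfl fun j _ => hterm j, ← Finset.mul_sum]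
    have hsum : ∑ j, (b j * (∑ i, b i * c i j) - b j * (∑ k, a j k * c j k)
        - b j * (∑ k, a j k * c k j)) = 0 := by
      have h2 : ∑ j, b j * (∑ k, a j k * c j k) = ∑ j, ∑ i, b i * (a i j * c i j) := by
        simp only [Finset.mul_sum]
        exact Finset.sum_comm
      rw [Finset.sum_sub_distrib, Finset.sum_sub_distrib, h2]
      simp only [Finset.mul_sum, ← Finset.sum_sub_distrib]
      refine Finset.sum_eq_zero fun j _ => Finset.sum_eq_zero fun i _ => ?_
      linear_combination c i j * hsymp i j
    rw [hsum, mul_zero]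
  rw [E1, E2]
  have hcomb : Δt * ∑ i, b i * ω (dF i) dz₀' + Δt * ∑ j, b j * ω dz₁ (dF' j) = 0 := by
    rw [← mul_add, ← Finset.sum_add_distrib, hmain, mul_zero]
  linarith
end

section
/- Let u₀, u₁, ..., u_s and v₀, v₁, ..., v_s, and w₁,...,w_s, x₁,...,x_s be elements of ℝ^m, J a skew-symmetric m×m matrix, and suppose u₁' := u₀ + Δt Σ_j b_j w_j with intermediate stages U_i = u₀ + Δt Σ_j a_{ij} w_j (and similarly V_i = v₀ + Δt Σ_j a_{ij} x_j, v₁' = v₀ + Δt Σ_j b_j x_j). Then (u₁')ᵀ J v₁' − u₀ᵀ J v₀ = Δt Σ_j (U_jᵀ J x_j + w_jᵀ J V_j) + Δt² Σ_{i,j} (b_i b_j − b_j a_{ji} − b_i a_{ij}) w_iᵀ J x_j. -/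
open Matrix

lemma aux_sum_dot {m s : ℕ} (f : Fin s → Fin m → ℝ) (v : Fin m → ℝ) :
    (∑ j, f j) ⬝ᵥ v = ∑ j, f j ⬝ᵥ v := by
  simp [dotProduct, Finset.sum_apply, Finset.sum_mul]
  exact Finset.sum_comm

lemma aux_dot_mulVec_sum {m s : ℕ} (J : Matrix (Fin m) (Fin m) ℝ)
    (u : Fin m → ℝ) (f : Fin s → Fin m → ℝ) :
    u ⬝ᵥ J.mulVec (∑ j, f j) = ∑ j, u ⬝ᵥ J.mulVec (f j) := by
  have h : J.mulVec (∑ j, f j) = ∑ j, J.mulVec (f j) := by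
    ext k
    simp [Matrix.mulVec, dotProduct, Finset.sum_apply, Finset.mul_sum]
    exact Finset.sum_comm
  rw [h]
  simp [dotProduct, Finset.sum_apply, Finset.mul_sum]
  exact Finset.sum_comm


/-- The Burrage–Butcher algebraic identity for one Runge–Kutta step: the change of
`uᵀ J v` over a step is a stage sum plus a `Δt²` term weighted by
`b_i b_j − b_j a_{ji} − b_i a_{ij}`. -/
theorem stmt3 {m s : ℕ} (J : Matrix (Fin m) (Fin m) ℝ) (hJ : Jᵀ = -J)
    (a : Fin s → Fin s → ℝ) (b : Fin s → ℝ) (Δt : ℝ)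
    (u₀ v₀ : Fin m → ℝ) (w x U V : Fin s → Fin m → ℝ)
    (hU : ∀ i, U i = u₀ + Δt • ∑ j, a i j • w j)
    (hV : ∀ i, V i = v₀ + Δt • ∑ j, a i j • x j)
    (u₁ v₁ : Fin m → ℝ)
    (hu₁ : u₁ = u₀ + Δt • ∑ j, b j • w j)
    (hv₁ : v₁ = v₀ + Δt • ∑ j, b j • x j) :
    u₁ ⬝ᵥ J.mulVec v₁ - u₀ ⬝ᵥ J.mulVec v₀ =
      Δt * ∑ j, b j * (U j ⬝ᵥ J.mulVec (x j) + w j ⬝ᵥ J.mulVec (V j)) +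
      Δt ^ 2 * ∑ i, ∑ j,
        (b i * b j - b j * a j i - b i * a i j) * (w i ⬝ᵥ J.mulVec (x j)) := by
  have h1 : ∑ j, ∑ i, Δt * (b j * (Δt * (a j i * (w i ⬝ᵥ J.mulVec (x j)))))
      = Δt ^ 2 * ∑ i, ∑ j, b j * a j i * (w i ⬝ᵥ J.mulVec (x j)) := by
    rw [Finset.sum_comm, Finset.mul_sum]
    exact Finset.sum_congr rfl fun i _ => by rw [Finset.mul_sum]; exact Finset.sum_congr rfl fun j _ => by ring
  have h2 : ∑ i, ∑ j, Δt * (b i * (Δt * (a i j * (w i ⬝ᵥ J.mulVec (x j)))))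
      = Δt ^ 2 * ∑ i, ∑ j, b i * a i j * (w i ⬝ᵥ J.mulVec (x j)) := by
    rw [Finset.mul_sum]
    exact Finset.sum_congr rfl fun i _ => by rw [Finset.mul_sum]; exact Finset.sum_congr rfl fun j _ => by ring
  have h3 : ∑ j, ∑ i, Δt * (Δt * (b j * (b i * (w i ⬝ᵥ J.mulVec (x j)))))
      = Δt ^ 2 * ∑ i, ∑ j, b i * b j * (w i ⬝ᵥ J.mulVec (x j)) := by
    rw [Finset.sum_comm, Finset.mul_sum]
    exact Finset.sum_congr rfl fun i _ => by rw [Finset.mul_sum]; exact Finset.sum_congr rfl fun j _ => by ring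
  simp only [hu₁, hv₁, hU, hV, add_dotProduct, dotProduct_add, smul_dotProduct,
    Matrix.mulVec_add, Matrix.mulVec_smul, dotProduct_smul, aux_sum_dot,
    aux_dot_mulVec_sum, smul_eq_mul, Finset.mul_sum, Finset.sum_mul, sub_mul,
    Finset.sum_sub_distrib, Finset.sum_add_distrib, mul_add, add_mul]
  rw [h1, h2, h3]
  ring
end
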